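/- arXiv:0909.1523 — 4 statements merged into one kernel-verified Lean document; each statement's English description precedes it below -/
import Mathlib

section
/- For every integer k ≥ 3, π = k·tan(π/k)·(1 − 2·S_k), where S_k = ∑_{n=1}^∞ 1/((k·n)² − 1). -/
/-! The Mittag-Leffler expansion `π cot (π x) = 1/x + ∑_{m ≥ 1} 2x/(x² - m²)` at `x = 1/k` reads
`π cot (π/k) = k (1 - 2 S_k)`; multiplying by `tan (π/k)`, which is the inverse of `cot (π/k)` as
`0 < π/k < π/2`, gives the formula. -/

open Real

theorem Real.pi_mul_cot_pi_mul_sub_one_div_eq_tsum {x : ℝ} (hx : x ∉ Set.range ((↑) : ℤ → ℝ)) :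
    π * cot (π * x) - 1 / x = ∑' n : ℕ, (1 / (x - (n + 1)) + 1 / (x + (n + 1))) := by
  have hxℂ : (x : ℂ) ∈ Complex.integerComplement := fun ⟨n, hn⟩ ↦ hx ⟨n, by exact_mod_cast hn⟩
  apply Complex.ofReal_injective
  push_cast [Complex.ofReal_tsum, Complex.ofReal_cot]
  exact cot_series_rep' hxℂ

lemma one_div_inv_sub_add_one_div_inv_add {k m : ℝ} (hkm : 1 < k * m) :
    1 / (k⁻¹ - m) + 1 / (k⁻¹ + m) = -2 * k * (1 / ((k * m) ^ 2 - 1)) := by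
  have hk : k ≠ 0 := by rintro rfl; simp at hkm; linarith
  have h1 : 1 - k * m ≠ 0 := by linarith
  have h2 : 1 + k * m ≠ 0 := by nlinarith
  rw [show k⁻¹ - m = (1 - k * m) / k by field_simp, show k⁻¹ + m = (1 + k * m) / k by field_simp,
    show (k * m) ^ 2 - 1 = -((1 - k * m) * (1 + k * m)) by ring]
  field_simp
  ring

lemma inv_natCast_notMem_range_intCast {k : ℕ} (hk : 2 ≤ k) :
    (k : ℝ)⁻¹ ∉ Set.range ((↑) : ℤ → ℝ) := by
  rintro ⟨n, hn⟩
  have hpos : (0 : ℝ) < n := by rw [hn]; positivity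
  have hlt : (n : ℝ) < 1 := by rw [hn]; exact inv_lt_one_of_one_lt₀ (by exact_mod_cast hk)
  have : (0 : ℤ) < n := by exact_mod_cast hpos
  have : n < 1 := by exact_mod_cast hlt
  omega

theorem pi_mul_cot_pi_div_natCast {k : ℕ} (hk : 2 ≤ k) :
    π * cot (π / k) = k * (1 - 2 * ∑' n : ℕ, 1 / (((k : ℝ) * (n + 1)) ^ 2 - 1)) := by
  have hk' : (2 : ℝ) ≤ k := by exact_mod_cast hk
  have hterm (n : ℕ) : 1 / ((k : ℝ)⁻¹ - (n + 1)) + 1 / ((k : ℝ)⁻¹ + (n + 1)) =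
      -2 * k * (1 / (((k : ℝ) * (n + 1)) ^ 2 - 1)) :=
    one_div_inv_sub_add_one_div_inv_add (by nlinarith [(n.cast_nonneg : (0 : ℝ) ≤ n)])
  have key := pi_mul_cot_pi_mul_sub_one_div_eq_tsum (inv_natCast_notMem_range_intCast hk)
  rw [funext hterm, tsum_mul_left, one_div, inv_inv, ← div_eq_mul_inv] at key
  linarith

/-- For every integer `k ≥ 3`, `π = k·tan(π/k)·(1 − 2·S_k)` where
`S_k = ∑_{n=1}^∞ 1/((k·n)² − 1)`. -/
theorem pi_eq_tan_mul (k : ℕ) (hk : 3 ≤ k) :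
    Real.pi =
      (k : ℝ) * Real.tan (Real.pi / k) *
        (1 - 2 * ∑' n : ℕ, 1 / (((k : ℝ) * (n + 1)) ^ 2 - 1)) := by
  have hk' : (3 : ℝ) ≤ k := by exact_mod_cast hk
  have hθ : 0 < π / k := by positivity
  have hθ' : π / k < π / 2 := div_lt_div_of_pos_left pi_pos two_pos (by linarith)
  have hsin : sin (π / k) ≠ 0 := (sin_pos_of_pos_of_lt_pi hθ (by linarith)).ne'
  have hcos : cos (π / k) ≠ 0 := (cos_pos_of_mem_Ioo ⟨by linarith, hθ'⟩).ne'
  calc π = tan (π / k) * (π * cot (π / k)) := by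
        rw [tan_eq_sin_div_cos, cot_eq_cos_div_sin]; field_simp
    _ = _ := by rw [pi_mul_cot_pi_div_natCast (by omega)]; ring
end

section
/- For all real x with 0 < x < π, cot(x) = 1/x − ∑_{m=1}^∞ 2^{2m}·|B_{2m}|·x^{2m−1}/(2m)!, i.e., the Laurent-type expansion of the cotangent in terms of Bernoulli numbers holds and the series converges for 0 < x < π. -/
open Real Finset

/-!
Expand each term of the Mittag-Leffler series `1/x - cot x = ∑_{j ≥ 1} 2x / (j²π² - x²)` as a
geometric series in `x² / (j²π²)`. For `0 < x < π` all terms of the resulting double series are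
nonnegative, so it may be summed in the other order, and summing over `j` first produces
`ζ(2m) = 2^(2m-1) π^(2m) |B_{2m}| / (2m)!`, whence the `m`-th Laurent coefficient.
-/

theorem hasSum_of_hasSum_fiberwise_of_nonneg {β γ : Type*} {f : β → γ → ℝ}
    (hf : ∀ b c, 0 ≤ f b c) {g : β → ℝ} {h : γ → ℝ} {a : ℝ} (hg : ∀ b, HasSum (f b) (g b))
    (ha : HasSum g a) (hh : ∀ c, HasSum (fun b ↦ f b c) (h c)) : HasSum h a := by
  have hf_summable : Summable (Function.uncurry f) := (summable_prod_of_nonneg fun p ↦ hf _ _).2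
    ⟨fun b ↦ (hg b).summable, by simpa only [(hg _).tsum_eq] using ha.summable⟩
  have hfa : HasSum (Function.uncurry f) a :=
    (hf_summable.hasSum.prod_fiberwise hg).unique ha ▸ hf_summable.hasSum
  exact ((Equiv.prodComm γ β).hasSum_iff.mpr hfa).prod_fiberwise hh

theorem hasSum_one_div_nat_succ_pow_two_mul {k : ℕ} (hk : k ≠ 0) :
    HasSum (fun n : ℕ ↦ 1 / ((n : ℝ) + 1) ^ (2 * k))
      (2 ^ (2 * k - 1) * π ^ (2 * k) * |(bernoulli (2 * k) : ℝ)| / (2 * k).factorial) := by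
  have hzeta := (hasSum_nat_add_iff' 1).mpr (hasSum_zeta_nat hk)
  simp only [Nat.cast_add, Nat.cast_one, range_one, sum_singleton, Nat.cast_zero,
    zero_pow (mul_ne_zero two_ne_zero hk), div_zero, sub_zero] at hzeta
  have hpos : 0 ≤ (-1 : ℝ) ^ (k + 1) * 2 ^ (2 * k - 1) * π ^ (2 * k) * bernoulli (2 * k) /
      (2 * k).factorial := hzeta.nonneg fun n ↦ by positivity
  rw [← abs_of_nonneg hpos] at hzeta
  simpa [abs_div, abs_mul, abs_of_pos pi_pos] using hzeta

theorem hasSum_two_mul_div_sub_sq {x q : ℝ} (hq : x ^ 2 < q) :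
    HasSum (fun m : ℕ ↦ 2 * x / q * (x ^ 2 / q) ^ m) (2 * x / (q - x ^ 2)) := by
  have hq0 : 0 < q := (sq_nonneg x).trans_lt hq
  rw [show 2 * x / (q - x ^ 2) = 2 * x / q * (1 - x ^ 2 / q)⁻¹ by
    field_simp [(sub_pos.2 hq).ne']]
  exact (hasSum_geometric_of_lt_one (by positivity) ((div_lt_one hq0).2 hq)).mul_left _

theorem Real.hasSum_one_div_sub_cot {x : ℝ} (hx : ∀ n : ℤ, (n : ℝ) * π ≠ x) :
    HasSum (fun n : ℕ ↦ 2 * x / (((n : ℝ) + 1) ^ 2 * π ^ 2 - x ^ 2)) (1 / x - cot x) := by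
  have hy : ((x / π : ℝ) : ℂ) ∈ Complex.integerComplement := by
    rintro ⟨n, hn⟩
    refine hx n ?_
    have : (n : ℝ) = x / π := by exact_mod_cast hn
    rw [this, div_mul_cancel₀ x pi_ne_zero]
  have hcot := ((summable_cotTerm hy).hasSum_iff_tendsto_nat.mpr
    (tendsto_logDeriv_euler_cot_sub hy)).mul_left (-1 / (π : ℂ))
  have hπ : (π : ℂ) ≠ 0 := Complex.ofReal_ne_zero.2 pi_ne_zero
  have hx0 : (x : ℂ) ≠ 0 := by
    simpa [eq_comm] using hx 0
  rw [← Complex.hasSum_ofReal]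
  convert! hcot.congr_fun fun n ↦ ?_ using 1
  · push_cast
    rw [mul_div_cancel₀ _ hπ]
    field_simp
    ring
  · have hden := Complex.integerComplement_add_ne_zero hy (n + 1)
    rw [cotTerm_identity hy]
    push_cast at hden ⊢
    field_simp
    rw [← one_div_neg_eq_neg_one_div]
    ring

theorem hasSum_cot_laurent_coeff (x : ℝ) (m : ℕ) :
    HasSum (fun j : ℕ ↦
        2 * x / (((j : ℝ) + 1) ^ 2 * π ^ 2) * (x ^ 2 / (((j : ℝ) + 1) ^ 2 * π ^ 2)) ^ m)
      (2 ^ (2 * (m + 1)) * |(bernoulli (2 * (m + 1)) : ℝ)| *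
          x ^ (2 * (m + 1) - 1) / (Nat.factorial (2 * (m + 1)))) := by
  have := (hasSum_one_div_nat_succ_pow_two_mul m.add_one_ne_zero).mul_left
    (2 * x ^ (2 * m + 1) / π ^ (2 * (m + 1)))
  convert! this using 1
  · ext j
    rw [mul_add_one, div_pow, mul_pow, ← pow_mul, ← pow_mul]
    field_simp
    ring
  · rw [show 2 * (m + 1) - 1 = 2 * m + 1 by omega]
    field_simp
    ring

/-- For `0 < x < π`, the Laurent-type expansion
`cot(x) = 1/x − ∑_{m=1}^∞ 2^{2m}·|B_{2m}|·x^{2m−1}/(2m)!` holds, the series converging. -/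
theorem cot_laurent (x : ℝ) (hx0 : 0 < x) (hxpi : x < Real.pi) :
    HasSum
      (fun m : ℕ =>
        2 ^ (2 * (m + 1)) * |(bernoulli (2 * (m + 1)) : ℝ)| *
          x ^ (2 * (m + 1) - 1) / (Nat.factorial (2 * (m + 1))))
      (1 / x - Real.cot x) := by
  have hq (j : ℕ) : x ^ 2 < ((j : ℝ) + 1) ^ 2 * π ^ 2 := by
    rw [← mul_pow]
    gcongr
    exact hxpi.trans_le (le_mul_of_one_le_left pi_pos.le (by simp))
  have hx (n : ℤ) : (n : ℝ) * π ≠ x := by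
    rintro rfl
    have hn_pos : (0 : ℝ) < n := pos_of_mul_pos_left hx0 pi_pos.le
    have hn_lt_one : (n : ℝ) < 1 := (mul_lt_iff_lt_one_left pi_pos).1 hxpi
    norm_cast at hn_pos hn_lt_one
    omega
  refine hasSum_of_hasSum_fiberwise_of_nonneg (fun j m ↦ ?_)
    (fun j ↦ hasSum_two_mul_div_sub_sq (hq j)) (Real.hasSum_one_div_sub_cot hx)
    (hasSum_cot_laurent_coeff x)
  have hq_pos := (sq_nonneg x).trans_lt (hq j)
  positivity
end

section
/- For every real x that is not an integer, π·cot(π·x) = 1/x + 2x·∑_{n=1}^∞ 1/(x² − n²), the series converging for such x. -/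
/-! The logarithmic derivative of Euler's product `sin πz = πz ∏ (1 - z²/n²)` gives, for
non-integer complex `z`, Mathlib's expansion `π cot πz - 1/z = ∑ (1/(z - n) + 1/(z + n))`.
Pairing the two terms gives `2z/(z² - n²)`, and a real non-integer `x` is such a `z`. -/

open Real

theorem Complex.ofReal_mem_integerComplement {x : ℝ} (hx : ∀ m : ℤ, x ≠ m) :
    (x : ℂ) ∈ integerComplement :=
  fun ⟨m, hm⟩ ↦ hx m (by exact_mod_cast hm.symm)

theorem Complex.hasSum_cotTerm {z : ℂ} (hz : z ∈ integerComplement) :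
    HasSum (cotTerm z) (π * cot (π * z) - 1 / z) :=
  (summable_cotTerm hz).hasSum_iff_tendsto_nat.mpr (tendsto_logDeriv_euler_cot_sub hz)

theorem Complex.cotTerm_eq_mul_one_div_sq_sub_sq {z : ℂ} (hz : z ∈ integerComplement) (n : ℕ) :
    cotTerm z n = 2 * z * (1 / (z ^ 2 - ((n : ℂ) + 1) ^ 2)) := by
  rw [cotTerm_identity hz]
  ring

theorem Real.hasSum_mul_one_div_sq_sub_sq {x : ℝ} (hx : ∀ m : ℤ, x ≠ m) :
    HasSum (fun n : ℕ ↦ 2 * x * (1 / (x ^ 2 - ((n : ℝ) + 1) ^ 2)))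
      (π * cot (π * x) - 1 / x) := by
  have hxC := Complex.ofReal_mem_integerComplement hx
  have h := Complex.hasSum_cotTerm hxC
  rw [funext (Complex.cotTerm_eq_mul_one_div_sq_sub_sq hxC)] at h
  rw [← Complex.hasSum_ofReal]
  exact_mod_cast h

/-- For every real `x` that is not an integer,
`π·cot(π·x) = 1/x + 2x·∑_{n=1}^∞ 1/(x² − n²)`, the series converging. -/
theorem pi_cot_eq (x : ℝ) (hx : ∀ m : ℤ, x ≠ m) :
    ∃ S : ℝ, HasSum (fun n : ℕ => 1 / (x ^ 2 - ((n : ℝ) + 1) ^ 2)) S ∧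
      Real.pi * Real.cot (Real.pi * x) = 1 / x + 2 * x * S := by
  have h2x : 2 * x ≠ 0 := mul_ne_zero two_ne_zero fun h ↦ hx 0 (by simp [h])
  have h := Real.hasSum_mul_one_div_sq_sub_sq hx
  refine ⟨_, (hasSum_mul_left_iff h2x).mp (by rwa [mul_div_cancel₀ _ h2x]), ?_⟩
  rw [mul_div_cancel₀ _ h2x]
  ring
end

section
/- With a = 2√2 and b = 1 + √3, tan(π/48) = (2a/(a − b))^{1/2} − (b − 2)/(a − b). -/
open Real

lemma tan_aux (t w r : ℝ) (ht0 : 0 < t) (ht1 : t < 1) (hw : 0 < w) (hr : 0 < r)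
    (hquad : w = 2 * t / (1 - t ^ 2)) (hsq : r ^ 2 = 1 + 1 / w ^ 2) :
    t = r - 1 / w := by
  have h1 : (0:ℝ) < 1 - t ^ 2 := by nlinarith
  have h2 : w * (1 - t ^ 2) = 2 * t := by
    rw [hquad]; field_simp
  have key : (t + 1 / w) ^ 2 = r ^ 2 := by
    rw [hsq]; field_simp; nlinarith [h2]
  have hpos : 0 < t + 1 / w := by positivity
  nlinarith [key, mul_pos hpos hr]

/-- With `a = 2√2` and `b = 1 + √3`, `tan(π/48) = (2a/(a − b))^{1/2} − (b − 2)/(a − b)`. -/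
theorem tan_pi_div_fortyeight :
    Real.tan (Real.pi / 48) =
      Real.sqrt (2 * (2 * Real.sqrt 2) / (2 * Real.sqrt 2 - (1 + Real.sqrt 3))) -
        ((1 + Real.sqrt 3) - 2) / (2 * Real.sqrt 2 - (1 + Real.sqrt 3)) := by
  have hpi := Real.pi_pos
  set s2 := Real.sqrt 2 with hs2def
  set s3 := Real.sqrt 3 with hs3def
  have hs2 : s2 ^ 2 = 2 := Real.sq_sqrt (by norm_num)
  have hs3 : s3 ^ 2 = 3 := Real.sq_sqrt (by norm_num)
  have hs2p : (0:ℝ) < s2 := Real.sqrt_pos.mpr (by norm_num)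
  have hs3p : (0:ℝ) < s3 := Real.sqrt_pos.mpr (by norm_num)
  have hs3lt : s3 < 2 := by nlinarith
  have hs3gt : 1 < s3 := by nlinarith
  have hs2gt : 1 < s2 := by nlinarith
  have hd : 0 < 2 * s2 - (1 + s3) := by nlinarith
  have ht48p : 0 < Real.tan (π / 48) :=
    Real.tan_pos_of_pos_of_lt_pi_div_two (by positivity) (by linarith)
  have ht24p : 0 < Real.tan (π / 24) :=
    Real.tan_pos_of_pos_of_lt_pi_div_two (by positivity) (by linarith)
  have ht48lt : Real.tan (π / 48) < 1 := by
    have := Real.tan_lt_tan_of_nonneg_of_lt_pi_div_two (x := π/48) (y := π/4)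
      (by positivity) (by linarith) (by linarith)
    rwa [Real.tan_pi_div_four] at this
  have ht24lt : Real.tan (π / 24) < 1 := by
    have := Real.tan_lt_tan_of_nonneg_of_lt_pi_div_two (x := π/24) (y := π/4)
      (by positivity) (by linarith) (by linarith)
    rwa [Real.tan_pi_div_four] at this
  -- tan (π/12) = 2 - √3
  have hcos12 : Real.cos (π / 12) = (s2 * s3 + s2) / 4 := by
    rw [show π / 12 = π / 3 - π / 4 by ring, Real.cos_sub, Real.cos_pi_div_three,
      Real.sin_pi_div_three, Real.cos_pi_div_four, Real.sin_pi_div_four]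
    ring
  have hsin12 : Real.sin (π / 12) = (s2 * s3 - s2) / 4 := by
    rw [show π / 12 = π / 3 - π / 4 by ring, Real.sin_sub, Real.cos_pi_div_three,
      Real.sin_pi_div_three, Real.cos_pi_div_four, Real.sin_pi_div_four]
    ring
  have h12 : Real.tan (π / 12) = 2 - s3 := by
    rw [Real.tan_eq_sin_div_cos, hcos12, hsin12]
    rw [div_eq_iff (by positivity)]
    linear_combination (s2 / 4) * hs3
  have h2s3 : (2 - s3) ≠ 0 := by linarith
  have hinv12 : 1 / (2 - s3) = 2 + s3 := by
    rw [eq_comm, eq_div_iff h2s3]; linear_combination -hs3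
  -- tan (π/24) = √2√3 + √2 - 2 - √3
  have h24 : Real.tan (π / 24) = s2 * s3 + s2 - 2 - s3 := by
    have haux := tan_aux (Real.tan (π / 24)) (Real.tan (π / 12)) (s2 * (s3 + 1))
      ht24p ht24lt (by rw [h12]; linarith) (by positivity)
      (by rw [show π / 12 = 2 * (π / 24) by ring, Real.tan_two_mul])
      (by
        rw [h12, ← one_div_pow, hinv12]
        linear_combination (s3 + 1) ^ 2 * hs2 + hs3)
    rw [haux, h12, hinv12]; ring
  have hup : (0:ℝ) < s2 * s3 + s2 - 2 - s3 := by rw [← h24]; exact ht24p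
  have hune : s2 * s3 + s2 - 2 - s3 ≠ 0 := ne_of_gt hup
  have hinv24 : 1 / (s2 * s3 + s2 - 2 - s3) = 2 + s3 + s2 * s3 + s2 := by
    rw [eq_comm, eq_div_iff hune]
    linear_combination (1 + s3) ^ 2 * hs2 + hs3
  have hrq : Real.sqrt (2 * (2 * s2) / (2 * s2 - (1 + s3))) ^ 2
      = 2 * (2 * s2) / (2 * s2 - (1 + s3)) :=
    Real.sq_sqrt (by positivity)
  have hrp : 0 < Real.sqrt (2 * (2 * s2) / (2 * s2 - (1 + s3))) :=
    Real.sqrt_pos.mpr (by positivity)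
  have haux := tan_aux (Real.tan (π / 48)) (Real.tan (π / 24))
    (Real.sqrt (2 * (2 * s2) / (2 * s2 - (1 + s3))))
    ht48p ht48lt ht24p hrp
    (by rw [show π / 24 = 2 * (π / 48) by ring, Real.tan_two_mul])
    (by
      rw [hrq, h24,
        ← one_div_pow,
        hinv24, div_eq_iff (ne_of_gt hd)]
      linear_combination (-(2+4*s3+2*s3^2)*s2 + (-7-9*s3-s3^2+s3^3)) * hs2 + (s2*(2*s3+2)+3*s3+3) * hs3)
  rw [haux, h24]
  have hfin : 1 / (s2 * s3 + s2 - 2 - s3) = (1 + s3 - 2) / (2 * s2 - (1 + s3)) := by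
    rw [div_eq_div_iff hune (ne_of_gt hd)]
    linear_combination (1 - s2) * hs3
  rw [hfin]
end
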